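/- arXiv:2602.03391 — 2 statements merged into one kernel-verified Lean document; each statement's English description precedes it below -/
import Mathlib

section
/- Fusion of ω-bushy trees: Let (T_i)_{i∈ω} be a sequence of trees on ω, each ω-bushy above its stem, with T_{i+1} ≤_i T_i for each i (meaning T_{i+1} ⊆ T_i and P_i(T_{i+1}) = P_i(T_i)). Then T = ⋂_i T_i is a tree which is ω-bushy above its stem. -/
namespace Paper

/-- Upward closure of a set of finite strings under the extension relation. -/
def UpClosure (B : Set (List ℕ)) : Set (List ℕ) := {τ | ∃ σ ∈ B, σ <+: τ}

/-- The transfinite ranking `R^T_{B,α}`: `R_0 = ↑B`, and for `α > 0`,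
`R_α = {τ ∈ T : infinitely many n have τ⌢n ∈ R_β for some β < α}`. -/
noncomputable def Rk (T B : Set (List ℕ)) : Ordinal.{0} → Set (List ℕ) :=
  Ordinal.lt_wf.fix fun α ih =>
    if α = 0 then UpClosure B
    else {τ | τ ∈ T ∧ {n : ℕ | ∃ β : Ordinal.{0}, ∃ h : β < α, τ ++ [n] ∈ ih β h}.Infinite}

/-- The ω-closure of `B` in `T`: `cl_T(B) = ⋃_{α<ω₁} R^T_{B,α}`. -/
noncomputable def clT (T B : Set (List ℕ)) : Set (List ℕ) :=
  ⋃ (α : Ordinal.{0}) (_ : α < (Cardinal.aleph 1).ord), Rk T B α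

/-- A tree on ω: a set of finite strings closed under initial segments. -/
def IsTree (T : Set (List ℕ)) : Prop := ∀ σ ∈ T, ∀ τ : List ℕ, τ <+: σ → τ ∈ T

/-- A leaf: a node with no proper extension in the tree. -/
def IsLeaf (T : Set (List ℕ)) (σ : List ℕ) : Prop := σ ∈ T ∧ ∀ τ ∈ T, σ <+: τ → τ = σ

/-- `T` is ω-bushy above `τ`: every non-leaf node of `T` extending `τ` has
infinitely many children in `T`. -/
def BushyAbove (T : Set (List ℕ)) (τ : List ℕ) : Prop :=
  ∀ σ ∈ T, τ <+: σ → ¬ IsLeaf T σ → {n : ℕ | σ ++ [n] ∈ T}.Infinite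

/-- `τ` is a stem of `T`: `τ ∈ T` and every node of `T` is comparable with `τ`. -/
def HasStem (T : Set (List ℕ)) (τ : List ℕ) : Prop :=
  τ ∈ T ∧ ∀ σ ∈ T, σ <+: τ ∨ τ <+: σ

/-- `T` has no infinite paths. -/
def NoPaths (T : Set (List ℕ)) : Prop :=
  ¬ ∃ f : ℕ → ℕ, ∀ n : ℕ, (List.range n).map f ∈ T

/-- The finite approximations `P_i(T)` (relative to the stem `σ`):
`P_0 = {σ}`, and `P_{i+1}` adds, for each `τ ∈ P_i`, the child `τ⌢n` of `τ`
with `n` least such that `τ⌢n ∈ T \ P_i`. -/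
def Pfin (T : Set (List ℕ)) (σ : List ℕ) : ℕ → Set (List ℕ)
  | 0 => {σ}
  | i + 1 => Pfin T σ i ∪
      {ρ | ∃ τ ∈ Pfin T σ i, ∃ n : ℕ, ρ = τ ++ [n] ∧ ρ ∈ T ∧ ρ ∉ Pfin T σ i ∧
        ∀ m < n, τ ++ [m] ∈ T → τ ++ [m] ∈ Pfin T σ i}


section Aux
variable {T T' : Set (List ℕ)} {σ : List ℕ}

lemma Pfin_succ_left {i : ℕ} {x : List ℕ} (h : x ∈ Pfin T σ i) : x ∈ Pfin T σ (i+1) :=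
  Or.inl h

lemma Pfin_mono_idx {i j : ℕ} (h : i ≤ j) : Pfin T σ i ⊆ Pfin T σ j := by
  induction j with
  | zero => simp_all [Nat.le_zero.mp h]
  | succ j ih =>
    rcases Nat.lt_or_ge i (j+1) with h' | h'
    · exact fun x hx => Pfin_succ_left (ih (Nat.lt_succ_iff.mp h') hx)
    · have : i = j + 1 := le_antisymm h h'
      subst this; exact fun x hx => hx

lemma self_mem_Pfin (i : ℕ) : σ ∈ Pfin T σ i := by
  induction i with
  | zero => rfl
  | succ i ih => exact Or.inl ih

lemma Pfin_subset (hσ : σ ∈ T) (i : ℕ) : Pfin T σ i ⊆ T := by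
  induction i with
  | zero => intro x hx; cases hx; exact hσ
  | succ i ih =>
    rintro x (hx | ⟨τ, hτ, n, rfl, hT, -, -⟩)
    · exact ih hx
    · exact hT

lemma Pfin_finite (i : ℕ) : (Pfin T σ i).Finite := by
  induction i with
  | zero => exact Set.finite_singleton σ
  | succ i ih =>
    refine ih.union ?_
    refine Set.Finite.of_finite_image (f := List.dropLast) ?_ ?_
    · refine ih.subset ?_
      rintro y ⟨x, ⟨τ, hτ, n, rfl, -, -, -⟩, rfl⟩
      simpa using hτ
    · rintro x ⟨τ₁, hτ₁, n₁, rfl, hT₁, hP₁, hmin₁⟩ y ⟨τ₂, hτ₂, n₂, rfl, hT₂, hP₂, hmin₂⟩ he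
      simp only [List.dropLast_concat] at he
      subst he
      have : n₁ = n₂ := by
        rcases lt_trichotomy n₁ n₂ with h | h | h
        · exact absurd (hmin₂ n₁ h hT₁) hP₁
        · exact h
        · exact absurd (hmin₁ n₂ h hT₂) hP₂
      rw [this]

/-- key downward lemma -/
lemma Pfin_eq_down (hTT : T' ⊆ T) (hσ : σ ∈ T') {j : ℕ}
    (hj : Pfin T' σ j = Pfin T σ j) : ∀ i, i ≤ j → Pfin T' σ i = Pfin T σ i := by
  intro i
  induction i with
  | zero => intro _; rfl
  | succ i ih =>
    intro hij
    have hi : Pfin T' σ i = Pfin T σ i := ih (by omega)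
    apply Set.Subset.antisymm
    · rintro x (hx | ⟨τ, hτ, n, rfl, hT'x, hnP, hmin⟩)
      · exact Or.inl (hi ▸ hx)
      · refine Or.inr ⟨τ, hi ▸ hτ, n, rfl, hTT hT'x, hi ▸ hnP, ?_⟩
        intro m hm hmT
        by_contra hmP
        set S : Set ℕ := {m' | τ ++ [m'] ∈ T ∧ τ ++ [m'] ∉ Pfin T σ i} with hS
        have hne : S.Nonempty := ⟨m, hmT, hmP⟩
        set m₀ := sInf S with hm₀
        have hm₀S : m₀ ∈ S := Nat.sInf_mem hne
        have hle : m₀ ≤ m := Nat.sInf_le ⟨hmT, hmP⟩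
        have hmem : τ ++ [m₀] ∈ Pfin T σ (i+1) := by
          refine Or.inr ⟨τ, hi ▸ hτ, m₀, rfl, hm₀S.1, hm₀S.2, ?_⟩
          intro m' hm' hm'T
          by_contra hm'P
          have hm'S : m' ∈ S := ⟨hm'T, hm'P⟩
          exact absurd (Nat.sInf_le hm'S) (by omega)
        have hmemT' : τ ++ [m₀] ∈ T' := by
          have h1 : τ ++ [m₀] ∈ Pfin T σ j := Pfin_mono_idx hij hmem
          rw [← hj] at h1
          exact Pfin_subset hσ j h1
        have := hmin m₀ (by omega) hmemT'
        rw [hi] at this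
        exact hm₀S.2 this
    · rintro x (hx | ⟨τ, hτ, n, rfl, hTx, hnP, hmin⟩)
      · exact Or.inl (hi ▸ hx)
      · have hxT' : τ ++ [n] ∈ T' := by
          have h1 : τ ++ [n] ∈ Pfin T σ (i+1) :=
            Or.inr ⟨τ, hτ, n, rfl, hTx, hnP, hmin⟩
          have h2 : τ ++ [n] ∈ Pfin T σ j := Pfin_mono_idx hij h1
          rw [← hj] at h2
          exact Pfin_subset hσ j h2
        exact Or.inr ⟨τ, hi ▸ hτ, n, rfl, hxT', hi ▸ hnP,
          fun m hm hmT => hi ▸ hmin m hm (hTT hmT)⟩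

lemma add_child {i n : ℕ} {τ : List ℕ}
    (hτ : τ ∈ Pfin T σ i) (hn : τ ++ [n] ∈ T) (hn' : τ ++ [n] ∉ Pfin T σ i) :
    ∃ m ≤ n, τ ++ [m] ∈ Pfin T σ (i+1) ∧ τ ++ [m] ∉ Pfin T σ i := by
  set S : Set ℕ := {m | τ ++ [m] ∈ T ∧ τ ++ [m] ∉ Pfin T σ i} with hS
  have hne : S.Nonempty := ⟨n, hn, hn'⟩
  have hm₀S : sInf S ∈ S := Nat.sInf_mem hne
  refine ⟨sInf S, Nat.sInf_le ⟨hn, hn'⟩, ?_, hm₀S.2⟩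
  refine Or.inr ⟨τ, hτ, sInf S, rfl, hm₀S.1, hm₀S.2, ?_⟩
  intro m' hm' hm'T
  by_contra hm'P
  have hm'S : m' ∈ S := ⟨hm'T, hm'P⟩
  exact absurd (Nat.sInf_le hm'S) (by omega)

lemma no_increasing (C : Set ℕ) (hC : C.Finite) (A : ℕ → Set ℕ)
    (hsub : ∀ k, A k ⊆ C) (hmono : ∀ k, A k ⊆ A (k+1))
    (hstrict : ∀ k, ∃ m, m ∈ A (k+1) ∧ m ∉ A k) : False := by
  have hfin : ∀ k, (A k).Finite := fun k => hC.subset (hsub k)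
  have hg : StrictMono (fun k => (A k).ncard) := by
    apply strictMono_nat_of_lt_succ
    intro k
    obtain ⟨m, hm1, hm2⟩ := hstrict k
    exact Set.ncard_lt_ncard ⟨hmono k, fun h => hm2 (h hm1)⟩ (hfin (k+1))
  have h1 : C.ncard + 1 ≤ (A (C.ncard + 1)).ncard := hg.le_apply
  have h2 : (A (C.ncard + 1)).ncard ≤ C.ncard :=
    Set.ncard_le_ncard (hsub _) hC
  omega


end Aux

/-- Fusion for ω-bushy trees: the intersection of a fusion sequence
(`T_{i+1} ≤_i T_i`, i.e. `T_{i+1} ⊆ T_i` and `P_i(T_{i+1}) = P_i(T_i)`)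
of trees ω-bushy above their common stem `σ` is a tree ω-bushy above `σ`. -/
theorem fusion_bushy (T : ℕ → Set (List ℕ)) (σ : List ℕ)
    (htree : ∀ i, IsTree (T i)) (hstem : ∀ i, HasStem (T i) σ)
    (hbushy : ∀ i, BushyAbove (T i) σ)
    (hsub : ∀ i, T (i + 1) ⊆ T i)
    (hP : ∀ i, Pfin (T (i + 1)) σ i = Pfin (T i) σ i) :
    IsTree (⋂ i, T i) ∧ HasStem (⋂ i, T i) σ ∧ BushyAbove (⋂ i, T i) σ := by
  have htreeI : IsTree (⋂ i, T i) := by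
    intro τ hτ ρ hρ
    exact Set.mem_iInter.2 fun i => htree i τ (Set.mem_iInter.1 hτ i) ρ hρ
  have hsub' : ∀ i j, i ≤ j → T j ⊆ T i := by
    intro i j
    induction j with
    | zero => intro h; rw [Nat.le_zero.mp h]
    | succ j ih =>
      intro h
      rcases Nat.lt_or_ge i (j+1) with h' | h'
      · exact fun x hx => ih (Nat.lt_succ_iff.mp h') (hsub j hx)
      · have : i = j + 1 := le_antisymm h h'
        subst this; exact fun x hx => hx
  have key : ∀ i j, i ≤ j → Pfin (T j) σ i = Pfin (T i) σ i := by
    intro i j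
    induction j with
    | zero => intro h; rw [Nat.le_zero.mp h]
    | succ j ih =>
      intro h
      rcases Nat.lt_or_ge i (j+1) with h' | h'
      · have hij : i ≤ j := Nat.lt_succ_iff.mp h'
        have hd := Pfin_eq_down (T' := T (j+1)) (T := T j) (hsub j) (hstem (j+1)).1
          (hP j) i hij
        rw [hd, ih hij]
      · have : i = j + 1 := le_antisymm h h'
        subst this; rfl
  have PinT : ∀ i, Pfin (T i) σ i ⊆ ⋂ j, T j := by
    intro i x hx
    refine Set.mem_iInter.2 fun j => ?_
    rcases le_total i j with h | h
    · rw [← key i j h] at hx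
      exact Pfin_subset (hstem j).1 i hx
    · exact hsub' j i h (Pfin_subset (hstem i).1 i hx)
  have Pmono : ∀ i j, i ≤ j → Pfin (T i) σ i ⊆ Pfin (T j) σ j := by
    intro i j hij x hx
    rw [← key i j hij] at hx
    exact Pfin_mono_idx hij hx
  have enterP : ∀ s : List ℕ, σ ++ s ∈ (⋂ j, T j) → ∃ i, σ ++ s ∈ Pfin (T i) σ i := by
    intro s
    induction s using List.reverseRecOn with
    | nil =>
      intro _
      exact ⟨0, by simpa using self_mem_Pfin (T := T 0) (σ := σ) 0⟩
    | append_singleton s n ih =>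
      intro hmem
      have hπ : σ ++ s ∈ ⋂ j, T j := htreeI _ hmem (σ ++ s) ⟨[n], by simp⟩
      obtain ⟨i, hi⟩ := ih hπ
      by_contra hno
      push_neg at hno
      simp only [← List.append_assoc] at hmem hno
      refine no_increasing (Set.Iic n) (Set.finite_Iic n)
        (fun k => {m | m ≤ n ∧ (σ ++ s) ++ [m] ∈ Pfin (T (i+k)) σ (i+k)}) ?_ ?_ ?_
      · rintro k m ⟨h1, -⟩; exact h1
      · rintro k m ⟨h1, h2⟩; exact ⟨h1, Pmono _ _ (by omega) h2⟩
      · intro k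
        have hτj : σ ++ s ∈ Pfin (T (i+k+1)) σ (i+k) := by
          rw [key (i+k) (i+k+1) (by omega)]
          exact Pmono i (i+k) (by omega) hi
        have hmemj : (σ ++ s) ++ [n] ∈ T (i+k+1) := Set.mem_iInter.1 hmem (i+k+1)
        have hnotj : (σ ++ s) ++ [n] ∉ Pfin (T (i+k+1)) σ (i+k) := by
          rw [key (i+k) (i+k+1) (by omega)]
          exact hno (i+k)
        obtain ⟨m, hmn, hm1, hm2⟩ := add_child hτj hmemj hnotj
        refine ⟨m, ⟨hmn, hm1⟩, fun hc => ?_⟩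
        simp only [Set.mem_setOf_eq] at hc
        rw [← key (i+k) (i+k+1) (by omega)] at hc
        exact hm2 hc.2
  have hbushyI : BushyAbove (⋂ i, T i) σ := by
    intro τ hτ hpre hnl
    obtain ⟨s, rfl⟩ := hpre
    have hex : ¬ ∀ ρ ∈ (⋂ j, T j), (σ ++ s) <+: ρ → ρ = σ ++ s := fun h => hnl ⟨hτ, h⟩
    push_neg at hex
    obtain ⟨ρ, hρ, hρpre, hρne⟩ := hex
    obtain ⟨t, rfl⟩ := hρpre
    cases t with
    | nil => simp at hρne
    | cons n₀ s' =>
      have hchild : (σ ++ s) ++ [n₀] ∈ ⋂ j, T j :=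
        htreeI _ hρ ((σ ++ s) ++ [n₀]) ⟨s', by simp⟩
      obtain ⟨i, hi⟩ := enterP s hτ
      by_contra hfin
      rw [Set.not_infinite] at hfin
      refine no_increasing _ hfin
        (fun k => {m | (σ ++ s) ++ [m] ∈ Pfin (T (i+k)) σ (i+k)}) ?_ ?_ ?_
      · intro k m hm; exact PinT _ hm
      · intro k m hm; exact Pmono _ _ (by omega) hm
      · intro k
        have hτj : σ ++ s ∈ Pfin (T (i+k+1)) σ (i+k) := by
          rw [key (i+k) (i+k+1) (by omega)]
          exact Pmono i (i+k) (by omega) hi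
        have hτT : σ ++ s ∈ T (i+k+1) := Set.mem_iInter.1 hτ (i+k+1)
        have hnlj : ¬ IsLeaf (T (i+k+1)) (σ ++ s) := by
          rintro ⟨-, hleaf⟩
          have := hleaf ((σ ++ s) ++ [n₀]) (Set.mem_iInter.1 hchild (i+k+1)) ⟨[n₀], rfl⟩
          simp at this
        have hinf := hbushy (i+k+1) (σ ++ s) hτT ⟨s, rfl⟩ hnlj
        have hPfinite : {m : ℕ | (σ ++ s) ++ [m] ∈ Pfin (T (i+k+1)) σ (i+k)}.Finite := by
          have heq : {m : ℕ | (σ ++ s) ++ [m] ∈ Pfin (T (i+k+1)) σ (i+k)}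
              = (fun m => (σ ++ s) ++ [m]) ⁻¹' (Pfin (T (i+k+1)) σ (i+k)) := rfl
          rw [heq]
          refine Set.Finite.preimage ?_ (Pfin_finite (i+k))
          intro a _ b _ hab
          simpa using hab
        obtain ⟨n₁, hn₁T, hn₁P⟩ := (hinf.diff hPfinite).nonempty
        obtain ⟨m, -, hm1, hm2⟩ := add_child hτj hn₁T hn₁P
        refine ⟨m, hm1, fun hc => ?_⟩
        simp only [Set.mem_setOf_eq] at hc
        rw [← key (i+k) (i+k+1) (by omega)] at hc
        exact hm2 hc
  refine ⟨htreeI, ⟨Set.mem_iInter.2 fun i => (hstem i).1, ?_⟩, hbushyI⟩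
  intro τ hτ
  exact (hstem 0).2 τ (Set.mem_iInter.1 hτ 0)

end Paper
end

section
/- For every B ⊆ 2^{<ω} × ω^{<ω}, the pair-closure operator clp satisfies clp(A ∪ B) = clp(A) ∪ clp(B). -/
namespace Paper

/-- Pairs of a binary string and a string of naturals. -/
abbrev PairStr : Type := List Bool × List ℕ

/-- The cumulative ranking for the pair-closure: `(σ,τ)` enters at stage `α`
iff `(σ,τ) ∈ B` or there is `σ' ≻ σ` such that for every `σ'' ⪰ σ'` there is
`σ''' ⪰ σ''` with infinitely many `n` such that `(σ''', τ⌢n)` entered at some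
stage `β < α`. -/
noncomputable def Rp (B : Set PairStr) : Ordinal.{0} → Set PairStr :=
  Ordinal.lt_wf.fix fun α ih =>
    B ∪ {p | ∃ σ' : List Bool, p.1 <+: σ' ∧ p.1 ≠ σ' ∧
      ∀ σ'' : List Bool, σ' <+: σ'' → ∃ σ''' : List Bool, σ'' <+: σ''' ∧
        {n : ℕ | ∃ β : Ordinal.{0}, ∃ h : β < α,
          ((σ''', p.2 ++ [n]) : PairStr) ∈ ih β h}.Infinite}

/-- The pair-closure `clp(B)`: the set of pairs admitting a `B`-rank. -/
noncomputable def clp (B : Set PairStr) : Set PairStr := ⋃ α : Ordinal.{0}, Rp B α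

theorem Rp_eq (B : Set PairStr) (α : Ordinal.{0}) :
    Rp B α = B ∪ {p | ∃ σ' : List Bool, p.1 <+: σ' ∧ p.1 ≠ σ' ∧
      ∀ σ'' : List Bool, σ' <+: σ'' → ∃ σ''' : List Bool, σ'' <+: σ''' ∧
        {n : ℕ | ∃ β : Ordinal.{0}, β < α ∧
          ((σ''', p.2 ++ [n]) : PairStr) ∈ Rp B β}.Infinite} := by
  conv_lhs => rw [Rp, Ordinal.lt_wf.fix_eq]
  simp only [exists_prop]
  rfl

theorem base_subset_clp (B : Set PairStr) : B ⊆ clp B := fun p hp =>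
  Set.mem_iUnion.2 ⟨0, by rw [Rp_eq]; exact Or.inl hp⟩

theorem Rp_mono {A B : Set PairStr} (h : A ⊆ B) : ∀ α, Rp A α ⊆ Rp B α := by
  intro α
  induction α using Ordinal.induction with
  | _ α ih =>
    rw [Rp_eq, Rp_eq]
    rintro p (hp | ⟨σ', h1, h2, h3⟩)
    · exact Or.inl (h hp)
    · refine Or.inr ⟨σ', h1, h2, fun σ'' hσ'' => ?_⟩
      obtain ⟨σ''', hp3, hinf⟩ := h3 σ'' hσ''
      refine ⟨σ''', hp3, hinf.mono fun n hn => ?_⟩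
      obtain ⟨β, hβ, hmem⟩ := hn
      exact ⟨β, hβ, ih β hβ hmem⟩

/-- Closure: if the density condition holds with `clp B` itself, then `p ∈ clp B`. -/
theorem mem_clp_of {B : Set PairStr} {p : PairStr}
    (h : ∃ σ' : List Bool, p.1 <+: σ' ∧ p.1 ≠ σ' ∧
      ∀ σ'' : List Bool, σ' <+: σ'' → ∃ σ''' : List Bool, σ'' <+: σ''' ∧
        {n : ℕ | ((σ''', p.2 ++ [n]) : PairStr) ∈ clp B}.Infinite) :
    p ∈ clp B := by
  classical
  obtain ⟨σ', h1, h2, h3⟩ := h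
  -- assign to each pair an ordinal stage witnessing membership in `clp B`, if any
  set O : PairStr → Ordinal.{0} := fun q =>
    if hq : ∃ γ : Ordinal.{0}, q ∈ Rp B γ then hq.choose else 0 with hO
  have hOspec : ∀ q : PairStr, q ∈ clp B → q ∈ Rp B (O q) := by
    intro q hq
    rw [clp, Set.mem_iUnion] at hq
    simp only [hO, dif_pos hq]
    exact hq.choose_spec
  set α : Ordinal.{0} := (⨆ q : PairStr, O q) + 1 with hα
  refine Set.mem_iUnion.2 ⟨α, ?_⟩
  rw [Rp_eq]
  refine Or.inr ⟨σ', h1, h2, fun σ'' hσ'' => ?_⟩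
  obtain ⟨σ''', hp3, hinf⟩ := h3 σ'' hσ''
  refine ⟨σ''', hp3, hinf.mono fun n hn => ?_⟩
  refine ⟨O (σ''', p.2 ++ [n]), ?_, hOspec _ hn⟩
  exact lt_of_le_of_lt (Ordinal.le_iSup O _) (lt_add_one _)

/-- The pair-closure operator commutes with binary unions. -/
theorem clp_union (A B : Set PairStr) : clp (A ∪ B) = clp A ∪ clp B := by
  classical
  apply Set.Subset.antisymm
  · have key : ∀ α : Ordinal.{0}, Rp (A ∪ B) α ⊆ clp A ∪ clp B := by
      intro α
      induction α using Ordinal.induction with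
      | _ α ih =>
        intro p hp
        rw [Rp_eq] at hp
        rcases hp with (hA | hB) | ⟨σ', h1, h2, h3⟩
        · exact Or.inl (base_subset_clp A hA)
        · exact Or.inr (base_subset_clp B hB)
        by_cases hpA : p ∈ clp A
        · exact Or.inl hpA
        right
        -- since p ∉ clp A, density for A fails everywhere
        have hfail : ∀ σ₀ : List Bool, p.1 <+: σ₀ → p.1 ≠ σ₀ →
            ∃ σh : List Bool, σ₀ <+: σh ∧ ∀ σ''' : List Bool, σh <+: σ''' →
              {n : ℕ | ((σ''', p.2 ++ [n]) : PairStr) ∈ clp A}.Finite := by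
          intro σ₀ hp1 hp2
          by_contra hcon
          push_neg at hcon
          exact hpA (mem_clp_of ⟨σ₀, hp1, hp2, fun σh hh => by
            obtain ⟨σ''', hh1, hh2⟩ := hcon σh hh
            exact ⟨σ''', hh1, hh2⟩⟩)
        obtain ⟨σh, hσh, hfin⟩ := hfail σ' h1 h2
        apply mem_clp_of
        refine ⟨σh, h1.trans hσh, ?_, fun σ'' hσ'' => ?_⟩
        · intro hEq
          have hle : σ' <+: p.1 := by rw [hEq]; exact hσh
          exact h2 (h1.eq_of_length (le_antisymm h1.length_le hle.length_le))
        · obtain ⟨σ''', hp3, hinf⟩ := h3 σ'' (hσh.trans hσ'')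
          have hfinA := hfin σ''' (hσ''.trans hp3)
          refine ⟨σ''', hp3, ?_⟩
          have hdiff := hinf.diff hfinA
          refine hdiff.mono ?_
          rintro n ⟨⟨β, hβ, hmem⟩, hnA⟩
          rcases ih β hβ hmem with h | h
          · exact absurd h hnA
          · exact h
    exact Set.iUnion_subset key
  · refine Set.union_subset ?_ ?_
    · exact Set.iUnion_subset fun α p hp =>
        Set.mem_iUnion.2 ⟨α, Rp_mono Set.subset_union_left α hp⟩
    · exact Set.iUnion_subset fun α p hp =>
        Set.mem_iUnion.2 ⟨α, Rp_mono Set.subset_union_right α hp⟩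

end Paper
end
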